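/- Let c₁,…,c_t be block columns of unbarred letters and d₁,…,d_r block columns of barred letters in C_n such that w = c₁⋯c_t d₁⋯d_r is a column. Let x_i be the largest letter of c_i and ȳ_j the smallest letter of d_j. Then w is an admissible column if and only if N_z(w) ≤ z for every z ∈ {x₁,…,x_t, y₁,…,y_r}. -/

import Mathlib

namespace TypeC

/-- Letters of `C_n` are encoded as indices `0, …, 2n-1` in increasing order:
index `x < n` is the unbarred value `x+1`, and index `x ≥ n` is the barred
letter `bar (2n - x)`.  `Nval n z w` is the number `N_z(w)` of letters `x` of
`w` with `x ≤ z` or `x ≥ z̄` (as values). -/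
def Nval (n z : ℕ) (w : List ℕ) : ℕ :=
  w.countP (fun x => decide (x + 1 ≤ z ∨ 2 * n - z ≤ x))

/-- A column: a strictly increasing word over `C_n`. -/
def IsColumn (n : ℕ) (w : List ℕ) : Prop :=
  List.Pairwise (· < ·) w ∧ ∀ x ∈ w, x < 2 * n

/-- An admissible column: nonempty and `N_z(w) ≤ z` for all `z = 1,…,n`. -/
def Admissible (n : ℕ) (w : List ℕ) : Prop :=
  IsColumn n w ∧ w ≠ [] ∧ ∀ z, 1 ≤ z → z ≤ n → Nval n z w ≤ z

/-- `v` is a (nonempty) strict factor of `w`. -/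
def StrictFactor (v w : List ℕ) : Prop :=
  v ≠ [] ∧ ∃ w₀ w₁, w = w₀ ++ v ++ w₁ ∧ ¬(w₀ = [] ∧ w₁ = [])

/-- An almost admissible column: not admissible, but all strict factors are. -/
def AlmostAdmissible (n : ℕ) (w : List ℕ) : Prop :=
  IsColumn n w ∧ ¬Admissible n w ∧ ∀ v, StrictFactor v w → Admissible n v

/-- Lecouvey's defining relations `R₁`, `R₂`, `R₃` of the type `C` plactic
monoid, on words of letter indices.  The bar involution on indices is
`x ↦ 2n - 1 - x`; the unbarred value `x` has index `x - 1` and `x̄` has index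
`2n - x`. -/
inductive PlStep (n : ℕ) : List ℕ → List ℕ → Prop
  | R1a (x y z : ℕ) : x ≤ y → y < z → z < 2 * n → z ≠ 2 * n - 1 - x →
      PlStep n [y, z, x] [y, x, z]
  | R1b (x y z : ℕ) : x < y → y ≤ z → z < 2 * n → z ≠ 2 * n - 1 - x →
      PlStep n [x, z, y] [z, x, y]
  | R2a (x y : ℕ) : 1 < x → x ≤ n → x - 1 ≤ y → y ≤ 2 * n - x →
      PlStep n [y, 2 * n - x + 1, x - 2] [y, x - 1, 2 * n - x]
  | R2b (x y : ℕ) : 1 < x → x ≤ n → x - 1 ≤ y → y ≤ 2 * n - x →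
      PlStep n [x - 1, 2 * n - x, y] [2 * n - x + 1, x - 2, y]
  | R3 (w : List ℕ) (z : ℕ) : AlmostAdmissible n w → 1 ≤ z → z ≤ n →
      (z - 1) ∈ w → (2 * n - z) ∈ w → Nval n z w = z + 1 →
      (∀ z', 1 ≤ z' → z' < z →
        ¬((z' - 1) ∈ w ∧ (2 * n - z') ∈ w ∧ Nval n z' w = z' + 1)) →
      PlStep n w ((w.erase (z - 1)).erase (2 * n - z))

/-- One plactic rewriting step in context. -/
def CtxStep (n : ℕ) (u v : List ℕ) : Prop :=
  ∃ a b x y, PlStep n x y ∧ u = a ++ x ++ b ∧ v = a ++ y ++ b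

/-- The plactic congruence of type `C`. -/
def PlacticEq (n : ℕ) : List ℕ → List ℕ → Prop :=
  Relation.EqvGen (CtxStep n)

/-- An `(a,b)`-configuration (Kashiwara–Nakashima) in the pair of columns
`(c, d)`. -/
def HasConfig (n : ℕ) (c d : List ℕ) : Prop :=
  ∃ a b p q r s, 1 ≤ a ∧ a ≤ b ∧ b ≤ n ∧ p ≤ q ∧ q < r ∧ r ≤ s ∧
    (((getElem? c p) = some (a - 1) ∧ (getElem? d q) = some (b - 1) ∧
      (getElem? d r) = some (2 * n - b) ∧ (getElem? d s) = some (2 * n - a)) ∨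
     ((getElem? c p) = some (a - 1) ∧ (getElem? c q) = some (b - 1) ∧
      (getElem? c r) = some (2 * n - b) ∧ (getElem? d s) = some (2 * n - a))) ∧
    b - a ≤ (s - r) + (q - p)

/-- `Prec n c d` means `c ⪯ d` : `c` is at least as long as `d`, entrywise
`≤`, and there is no `(a,b)`-configuration.  With the convention `ε = []`,
this gives `c ⪯ ε` for every `c`. -/
def Prec (n : ℕ) (c d : List ℕ) : Prop :=
  d.length ≤ c.length ∧
  (∀ i xi yi, (getElem? c (i : ℕ)) = some xi → (getElem? d (i : ℕ)) = some yi → xi ≤ yi) ∧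
  ¬HasConfig n c d

/-- A generator of `ACol`: the empty column `ε = []` or an admissible column. -/
def ColOrEps (n : ℕ) (c : List ℕ) : Prop := c = [] ∨ Admissible n c

/-- `(c₁ ← c₂) = d₁d₂` : the pair `(d₁, d₂)` is the `ε`-padded normal form of
the column insertion, characterised as the normal pair plactically congruent
to `c₁c₂`. -/
def InsPair (n : ℕ) (c₁ c₂ d₁ d₂ : List ℕ) : Prop :=
  ColOrEps n d₁ ∧ ColOrEps n d₂ ∧ Prec n d₂ d₁ ∧
  PlacticEq n (c₁ ++ c₂) (d₁ ++ d₂)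

/-- A rewriting step of the `2`-polygraph `ACol` at position `j`. -/
def StepAt (n : ℕ) (j : ℕ) (w w' : List (List ℕ)) : Prop :=
  ∃ (u v : List (List ℕ)) (c₁ c₂ d₁ d₂ : List ℕ),
    u.length = j ∧ w = u ++ c₁ :: c₂ :: v ∧ w' = u ++ d₁ :: d₂ :: v ∧
    ¬Prec n c₂ c₁ ∧ InsPair n c₁ c₂ d₁ d₂

/-- A rewriting step of `ACol` (at some position). -/
def AColStep (n : ℕ) (w w' : List (List ℕ)) : Prop := ∃ j, StepAt n j w w'

/-- The congruence generated by `ACol`, presenting `Pl^ℕ(C_n)`. -/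
def AColEq (n : ℕ) : List (List ℕ) → List (List ℕ) → Prop :=
  Relation.EqvGen (AColStep n)

/-- `RedTo n w s w'` : applying the reduction strategy `s` (a list of
positions) to `w` is valid and yields `w'`. -/
inductive RedTo (n : ℕ) : List (List ℕ) → List ℕ → List (List ℕ) → Prop
  | nil (w : List (List ℕ)) : RedTo n w [] w
  | cons {w w' w'' : List (List ℕ)} {j : ℕ} {s : List ℕ} :
      StepAt n j w w' → RedTo n w' s w'' → RedTo n w (j :: s) w''

/-- A tableau word: a word of admissible columns with `c_{i+1} ⪯ c_i`. -/
def TabWord (n : ℕ) (g : List (List ℕ)) : Prop :=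
  (∀ c ∈ g, Admissible n c) ∧ List.Chain' (fun cl cr => Prec n cr cl) g

/-- The label of the crystal edge going out of the letter with index `x`. -/
def labelOf (n x : ℕ) : ℕ := if x < n then x + 1 else 2 * n - 1 - x

def phiL (n i x : ℕ) : ℕ := if x + 1 < 2 * n ∧ labelOf n x = i then 1 else 0

def epsL (n i x : ℕ) : ℕ := if 0 < x ∧ labelOf n (x - 1) = i then 1 else 0

/-- `ε_i` of a word (Kashiwara). -/
def epsW (n i : ℕ) : List ℕ → ℕ
  | [] => 0
  | x :: u => epsL n i x + (epsW n i u - phiL n i x)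

/-- `φ_i` of a word (Kashiwara). -/
def phiW (n i : ℕ) : List ℕ → ℕ
  | [] => 0
  | x :: u => phiW n i u + (phiL n i x - epsW n i u)

/-- The Kashiwara lowering operator `f_i` on words of `C_n^*`. -/
def fW (n i : ℕ) : List ℕ → Option (List ℕ)
  | [] => none
  | x :: u =>
      if epsW n i u < phiL n i x then some ((x + 1) :: u)
      else (fW n i u).map (x :: ·)

/-- The Kashiwara raising operator `e_i` on words of `C_n^*`. -/
def eW (n i : ℕ) : List ℕ → Option (List ℕ)
  | [] => none
  | x :: u =>
      if epsW n i u ≤ phiL n i x then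
        (if epsL n i x = 1 then some ((x - 1) :: u) else none)
      else (eW n i u).map (x :: ·)

/-- `f_i` on words over `ACol(C_n)` (each letter a column, `ε = []`). -/
def fA (n i : ℕ) : List (List ℕ) → Option (List (List ℕ))
  | [] => none
  | c :: w =>
      if epsW n i w.flatten < phiW n i c then (fW n i c).map (· :: w)
      else (fA n i w).map (c :: ·)

/-- `e_i` on words over `ACol(C_n)`. -/
def eA (n i : ℕ) : List (List ℕ) → Option (List (List ℕ))
  | [] => none
  | c :: w =>
      if epsW n i w.flatten ≤ phiW n i c then (eW n i c).map (· :: w)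
      else (eA n i w).map (c :: ·)

/-! C-trees.  A labeling of the `C`-tree is encoded by two functions
`sOut i j = s(ij)` (outer vertices, `sOut i 0 = s(i)`) and
`sInn i j = s(ij⁻)` (inner vertices, `j ≥ 1`), for strands `i ≥ 1`. -/

def SO (sOut : ℕ → ℕ → ℕ) (i j : ℕ) : ℕ := ∑ l ∈ Finset.range (j + 1), sOut i l
def SI (sInn : ℕ → ℕ → ℕ) (i j : ℕ) : ℕ := ∑ l ∈ Finset.range (j + 1), sInn i l

/-- The valuation `q(ij)` at an outer vertex. -/
def qOut (sOut sInn : ℕ → ℕ → ℕ) (i j : ℕ) : ℕ := SO sOut i j - SI sInn i (j - 1)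

/-- The valuation `q(ij⁻)` at an inner vertex. -/
def qInn (sOut sInn : ℕ → ℕ → ℕ) (i j : ℕ) : ℕ := SO sOut i j - SI sInn i j

/-- Labels vanish outside the rank-`k` truncation (and on the fictitious
strand `0` and inner vertices `i0⁻`). -/
def TreeSupport (k : ℕ) (sOut sInn : ℕ → ℕ → ℕ) : Prop :=
  (∀ i j, i = 0 ∨ k < i + j → sOut i j = 0) ∧
  (∀ i j, i = 0 ∨ j = 0 ∨ k < i + j → sInn i j = 0)

/-- `n`-labeling condition: `0 ≤ q(v) ≤ n` at every vertex. -/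
def NLabeled (n : ℕ) (sOut sInn : ℕ → ℕ → ℕ) : Prop :=
  ∀ i j, SI sInn i j ≤ SO sOut i j ∧ qOut sOut sInn i j ≤ n

/-- Column conditions: `q(ij) ≤ q((i−1)(j+1)⁻)` and `q(ij) ≤ q((i−1)j⁻)`. -/
def ColumnCond (k : ℕ) (sOut sInn : ℕ → ℕ → ℕ) : Prop :=
  ∀ i j, 2 ≤ i → i + j ≤ k →
    qOut sOut sInn i j ≤ qInn sOut sInn (i - 1) (j + 1) ∧
    (1 ≤ j → qOut sOut sInn i j ≤ qInn sOut sInn (i - 1) j)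

/-- Admissibility conditions of a labeled `C`-tree. -/
def AdmissCond (k : ℕ) (sOut sInn : ℕ → ℕ → ℕ) : Prop :=
  ∀ t l, t ≤ k → l + 1 ≤ t →
    (∑ i ∈ Finset.range (l + 1), (sOut (t - i) i + sInn (t - i) i)) ≤
      qOut sOut sInn (t - l) l

/-- An admissible `n`-labeled `C`-tree of rank `k`. -/
def IsAdmTree (n k : ℕ) (sOut sInn : ℕ → ℕ → ℕ) : Prop :=
  TreeSupport k sOut sInn ∧ NLabeled n sOut sInn ∧
  ColumnCond k sOut sInn ∧ AdmissCond k sOut sInn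

/-- The block column `ρ(ij)` read off an outer vertex. -/
def rhoOut (sOut sInn : ℕ → ℕ → ℕ) (i j : ℕ) : List ℕ :=
  if j = 0 then List.range (sOut i 0)
  else List.range' (qInn sOut sInn i (j - 1)) (sOut i j)

/-- The block column `ρ(ij⁻)` read off an inner vertex. -/
def rhoInn (n : ℕ) (sOut sInn : ℕ → ℕ → ℕ) (i j : ℕ) : List ℕ :=
  List.range' (2 * n - qOut sOut sInn i j) (sInn i j)

/-- The reading `ω_t` of the `t`-th level. -/
def levelWord (n : ℕ) (sOut sInn : ℕ → ℕ → ℕ) (t : ℕ) : List ℕ :=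
  ((List.range t).map (fun l => rhoOut sOut sInn (t - l) l)).flatten ++
  ((List.range (t - 1)).map (fun m => rhoInn n sOut sInn (m + 1) (t - (m + 1)))).flatten

/-- The reading `ω(T) ∈ ACol(C_n)^*` of a labeled `C`-tree of rank `k`. -/
def omegaT (n k : ℕ) (sOut sInn : ℕ → ℕ → ℕ) : List (List ℕ) :=
  (List.range k).map (fun t => levelWord n sOut sInn (t + 1))

/-! For distinct letters, `N_{z+1}(w) - N_z(w)` counts which of `z+1` and its bar occur
in `w`, so `N_z(w) ≤ z` can only first fail at a `z` with both `z` and `z̄` in `w`.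
Such a pair moves to `z+1` and its bar as long as `z` is not the largest letter of its
block `c_i` and `z̄` not the smallest letter of its block `d_j`; every move raises `N`
by exactly `2` and `z` by `1`, so the bound at the last pair, where `z = x_i` or
`z = y_j`, gives the bound at the first. -/

section Blocks

variable {l : List ℕ}

theorem succ_mem_or_getLast?_eq_of_isChain (hl : l.IsChain (fun a b => b = a + 1)) {x : ℕ}
    (hx : x ∈ l) : x + 1 ∈ l ∨ l.getLast? = some x := by
  induction l with
  | nil => simp at hx
  | cons a l ih =>
    cases l with
    | nil => simp_all
    | cons b l =>
      obtain ⟨rfl, hl⟩ := List.isChain_cons_cons.1 hl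
      rcases List.mem_cons.1 hx with rfl | hx
      · simp
      · rw [List.getLast?_cons_cons]
        exact (ih hl hx).imp_left (List.mem_cons_of_mem a)

theorem mem_or_head?_eq_of_isChain (hl : l.IsChain (fun a b => b = a + 1)) {x : ℕ}
    (hx : x + 1 ∈ l) : x ∈ l ∨ l.head? = some (x + 1) := by
  induction l with
  | nil => simp at hx
  | cons a l ih =>
    rcases List.mem_cons.1 hx with rfl | hx
    · simp
    · cases l with
      | nil => simp at hx
      | cons b l =>
        obtain ⟨rfl, hl⟩ := List.isChain_cons_cons.1 hl
        rcases ih hl hx with h | h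
        · exact .inl (List.mem_cons_of_mem _ h)
        · simp_all

end Blocks

section Nval

variable {n : ℕ} {w : List ℕ}

theorem Nval_zero (hw : ∀ x ∈ w, x < 2 * n) : Nval n 0 w = 0 := by
  rw [Nval, List.countP_eq_zero]
  intro x hx
  have := hw x hx
  simp only [decide_eq_true_eq]
  omega

theorem Nval_succ (w : List ℕ) {z : ℕ} (hz : z < n) :
    Nval n (z + 1) w = Nval n z w + w.count z + w.count (2 * n - (z + 1)) := by
  induction w with
  | nil => simp [Nval]
  | cons a w ih =>
    simp only [Nval, List.countP_cons, List.count_cons, decide_eq_true_eq, beq_iff_eq] at *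
    split_ifs <;> omega

theorem Nval_le_of_climb
    (hclimb : ∀ k < n, k ∈ w → 2 * n - (k + 1) ∈ w →
      Nval n (k + 1) w ≤ k + 1 ∨ (k + 1 < n ∧ k + 1 ∈ w ∧ 2 * n - (k + 2) ∈ w))
    {k : ℕ} (hk : k < n) (hkw : k ∈ w) (hbar : 2 * n - (k + 1) ∈ w) :
    Nval n (k + 1) w ≤ k + 1 := by
  induction hm : n - k using Nat.strong_induction_on generalizing k with
  | _ m ih =>
    rcases hclimb k hk hkw hbar with h | ⟨hk₁, hkw₁, hbar₁⟩
    · exact h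
    · have hnext := ih (n - (k + 1)) (by omega) hk₁ hkw₁ hbar₁ rfl
      have hsucc := Nval_succ w hk₁
      have := List.count_pos_iff.2 hkw₁
      have := List.count_pos_iff.2 hbar₁
      omega

theorem Nval_le_of_forall_pair (hnd : w.Nodup) (hw : ∀ x ∈ w, x < 2 * n)
    (hpair : ∀ k < n, k ∈ w → 2 * n - (k + 1) ∈ w → Nval n (k + 1) w ≤ k + 1) :
    ∀ z ≤ n, Nval n z w ≤ z := by
  intro z
  induction z with
  | zero => simp [Nval_zero hw]
  | succ k ih =>
    intro hk
    by_cases hboth : k ∈ w ∧ 2 * n - (k + 1) ∈ w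
    · exact hpair k hk hboth.1 hboth.2
    · have hsucc := Nval_succ w (z := k) hk
      have := List.nodup_iff_count_le_one.1 hnd k
      have := List.nodup_iff_count_le_one.1 hnd (2 * n - (k + 1))
      have := ih (by omega)
      rw [not_and_or, ← List.count_eq_zero, ← List.count_eq_zero] at hboth
      omega

end Nval

/-- The letter `x_i` has value `(c i).getLast?.getD 0 + 1`, and `y_j`, where `ȳ_j` is the
smallest letter of `d j`, is `2 * n - (d j).head?.getD 0`. -/
theorem stmt3 (n t r : ℕ) (c : Fin t → List ℕ) (d : Fin r → List ℕ)
    (hc : ∀ i, c i ≠ [] ∧ List.Chain' (fun a b => b = a + 1) (c i) ∧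
      ∀ x ∈ c i, x < n)
    (hd : ∀ j, d j ≠ [] ∧ List.Chain' (fun a b => b = a + 1) (d j) ∧
      ∀ x ∈ d j, n ≤ x ∧ x < 2 * n)
    (w : List ℕ)
    (hw : w = (List.ofFn c).flatten ++ (List.ofFn d).flatten)
    (hcol : IsColumn n w) :
    (∀ z, 1 ≤ z → z ≤ n → Nval n z w ≤ z) ↔
      ((∀ i, Nval n ((c i).getLast?.getD 0 + 1) w ≤ (c i).getLast?.getD 0 + 1) ∧
       (∀ j, Nval n (2 * n - (d j).head?.getD 0) w ≤
          2 * n - (d j).head?.getD 0)) := by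
  obtain ⟨hsorted, hlt⟩ := hcol
  have hmem : ∀ x, x ∈ w ↔ (∃ i, x ∈ c i) ∨ ∃ j, x ∈ d j := by
    subst hw
    simp [List.mem_flatten, List.mem_ofFn]
  constructor
  · intro H
    refine ⟨fun i => ?_, fun j => ?_⟩
    · obtain ⟨hne, -, hci⟩ := hc i
      have := hci _ (List.getLast_mem hne)
      rw [List.getLast?_eq_some_getLast hne, Option.getD_some]
      exact H _ (by omega) (by omega)
    · obtain ⟨hne, -, hdj⟩ := hd j
      have := hdj _ (List.head_mem hne)
      rw [List.head?_eq_some_head hne, Option.getD_some]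
      exact H _ (by omega) (by omega)
  · rintro ⟨Hc, Hd⟩ z - hzn
    refine Nval_le_of_forall_pair hsorted.nodup hlt (fun _ hk => Nval_le_of_climb ?_ hk) z hzn
    intro k hk hkw hbar
    obtain ⟨i, hi⟩ : ∃ i, k ∈ c i := ((hmem k).1 hkw).resolve_right
      fun ⟨j, hj⟩ => absurd ((hd j).2.2 k hj).1 (by omega)
    obtain ⟨j, hj⟩ : ∃ j, 2 * n - (k + 2) + 1 ∈ d j := by
      rw [show 2 * n - (k + 2) + 1 = 2 * n - (k + 1) by omega]
      exact ((hmem _).1 hbar).resolve_left fun ⟨i', hi'⟩ => absurd ((hc i').2.2 _ hi') (by omega)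
    rcases succ_mem_or_getLast?_eq_of_isChain (hc i).2.1 hi with hsucc | hlast
    · rcases mem_or_head?_eq_of_isChain (hd j).2.1 hj with hpred | hhead
      · exact .inr ⟨(hc i).2.2 _ hsucc, (hmem _).2 (.inl ⟨i, hsucc⟩),
          (hmem _).2 (.inr ⟨j, hpred⟩)⟩
      · have := Hd j
        rw [hhead, Option.getD_some, show 2 * n - (2 * n - (k + 2) + 1) = k + 1 by omega] at this
        exact .inl this
    · exact .inl (by simpa [hlast] using Hc i)

end TypeC
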